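/- Let f ∈ H^{3/2}(ℝ/ℤ) be a closed curve in ℝⁿ and let 0 ≤ θ₁ < θ₂ < … < θ_m < 1 satisfy the equilateral condition. Then for every i (indices mod m), ‖Δᵢf − Δᵢ₊₁f‖ ≤ 2(θᵢ₊₂ − θᵢ)·[f']_{H^{1/2}([θᵢ,θᵢ₊₂]×[θᵢ,θᵢ₊₂])}, where Δᵢf = f(θᵢ₊₁) − f(θᵢ). -/

import Mathlib

/-! Write `x = Δᵢf` and `y = Δᵢ₊₁f` as integrals of `f'` over `I = [θᵢ, θᵢ₊₁]` and
`J = [θᵢ₊₁, θᵢ₊₂]`, of lengths `α` and `β`. Averaging `f'(s) - f'(t)` over `I × J` gives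
`β x - α y`, and since `‖x‖ = ‖y‖` we have `√(αβ) ‖x - y‖ ≤ ‖β x - α y‖`. On the other hand
`‖f'(s) - f'(t)‖ ≤ (θᵢ₊₂ - θᵢ) ‖f'(s) - f'(t)‖ / d(s, t)` on `I × J`, and Cauchy–Schwarz bounds the
integral of the quotient by `√(αβ) [f']_{H^{1/2}}`; dividing by `√(αβ)` gives the estimate,
even without the factor `2`. -/

open MeasureTheory Real
open scoped RealInnerProductSpace ENNReal

noncomputable section

/-- The standard distance on `ℝ/ℤ`, expressed through real representatives. -/
def circleDist (a b : ℝ) : ℝ := min (Int.fract (a - b)) (1 - Int.fract (a - b))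

/-- The `H^{1/2}`-seminorm `[u]_{H^{1/2}(I×J)}`. -/
def seminormH {n : ℕ} (u : ℝ → EuclideanSpace ℝ (Fin n)) (I J : Set ℝ) : ℝ :=
  Real.sqrt (∫ a in I, ∫ b in J, ‖u a - u b‖ ^ 2 / circleDist a b ^ 2)

/-- `K(u, ε)`: supremum of the `H^{1/2}`-seminorms of `u` over pairs of
measurable subsets of `ℝ/ℤ` of measure at most `ε`. -/
def Kmod {n : ℕ} (u : ℝ → EuclideanSpace ℝ (Fin n)) (ε : ℝ) : ℝ :=
  sSup { r : ℝ | ∃ I J : Set ℝ, MeasurableSet I ∧ MeasurableSet J ∧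
    I ⊆ Set.Ico (0 : ℝ) 1 ∧ J ⊆ Set.Ico (0 : ℝ) 1 ∧
    volume I ≤ ENNReal.ofReal ε ∧ volume J ≤ ENNReal.ofReal ε ∧
    r = seminormH u I J }

/-- Difference operator `Δᵢ` in the first index. -/
def dOpI (u : ℤ → ℤ → ℝ) (i j : ℤ) : ℝ := u (i + 1) j - u i j

/-- Difference operator `Δⱼ` in the second index. -/
def dOpJ (u : ℤ → ℤ → ℝ) (i j : ℤ) : ℝ := u i (j + 1) - u i j

/-- Arithmetic mean `Aᵢ` in the first index. -/
def aOpI (u : ℤ → ℤ → ℝ) (i j : ℤ) : ℝ := (u i j + u (i + 1) j) / 2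

/-- Arithmetic mean `Aⱼ` in the second index. -/
def aOpJ (u : ℤ → ℤ → ℝ) (i j : ℤ) : ℝ := (u i j + u i (j + 1)) / 2

/-- Arithmetic mean `A_{ij}` over the four corners. -/
def aOpIJ (u : ℤ → ℤ → ℝ) (i j : ℤ) : ℝ :=
  (u i j + u (i + 1) j + u i (j + 1) + u (i + 1) (j + 1)) / 4

/-- The chord `Δᵢʲf = f(θⱼ) − f(θᵢ)`. -/
def chord {n : ℕ} (f : ℝ → EuclideanSpace ℝ (Fin n)) (θ : ℤ → ℝ) (i j : ℤ) :
    EuclideanSpace ℝ (Fin n) := f (θ j) - f (θ i)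

/-- The edge `Δᵢf = f(θᵢ₊₁) − f(θᵢ)`. -/
def edge {n : ℕ} (f : ℝ → EuclideanSpace ℝ (Fin n)) (θ : ℤ → ℝ) (i : ℤ) :
    EuclideanSpace ℝ (Fin n) := f (θ (i + 1)) - f (θ i)

/-- The unit edge vector `Δᵢf/‖Δᵢf‖`. -/
def uedge {n : ℕ} (f : ℝ → EuclideanSpace ℝ (Fin n)) (θ : ℤ → ℝ) (i : ℤ) :
    EuclideanSpace ℝ (Fin n) := ‖edge f θ i‖⁻¹ • edge f θ i

/-- Chord length `‖Δᵢʲf‖` as a doubly indexed quantity. -/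
def chn {n : ℕ} (f : ℝ → EuclideanSpace ℝ (Fin n)) (θ : ℤ → ℝ) (i j : ℤ) : ℝ :=
  ‖chord f θ i j‖

open Set

lemma circleDist_nonneg (a b : ℝ) : 0 ≤ circleDist a b :=
  le_min (Int.fract_nonneg _) (sub_nonneg.2 (Int.fract_lt_one _).le)

lemma circleDist_le_abs_sub (a b : ℝ) : circleDist a b ≤ |a - b| := by
  rcases le_or_gt 0 (a - b) with h | h
  · have : (0 : ℝ) ≤ ⌊a - b⌋ := by exact_mod_cast Int.floor_nonneg.2 h
    rw [abs_of_nonneg h]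
    exact (min_le_left _ _).trans (by rw [Int.fract]; linarith)
  · have : (⌊a - b⌋ : ℝ) ≤ -1 := by
      exact_mod_cast Int.floor_le_iff.2 (by push_cast; linarith)
    rw [abs_of_neg h]
    exact (min_le_right _ _).trans (by rw [Int.fract]; linarith)

lemma circleDist_pos {a b : ℝ} (h : |a - b| < 1) (hne : a ≠ b) : 0 < circleDist a b := by
  have hfract : Int.fract (a - b) ≠ 0 := by
    rw [Ne, Int.fract_eq_zero_iff]
    rintro ⟨k, hk⟩
    rw [← hk, ← Int.cast_abs, ← Int.cast_one, Int.cast_lt, Int.abs_lt_one_iff] at h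
    rw [h, Int.cast_zero, eq_comm, sub_eq_zero] at hk
    exact hne hk
  exact lt_min ((Int.fract_nonneg _).lt_of_ne' hfract) (sub_pos.2 (Int.fract_lt_one _))

lemma circleDist_add_intCast (a b : ℝ) (k l : ℤ) :
    circleDist (a + k) (b + l) = circleDist a b := by
  have : a + k - (b + l) = a - b + ((k - l : ℤ) : ℝ) := by push_cast; ring
  rw [circleDist, circleDist, this, Int.fract_add_intCast]

lemma measurable_circleDist : Measurable fun p : ℝ × ℝ => circleDist p.1 p.2 :=
  have h := measurable_fract.comp (measurable_fst.sub measurable_snd)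
  h.min (measurable_const.sub h)

lemma sqrt_mul_mul_norm_sub_le_norm_smul_sub_smul {E : Type*} [NormedAddCommGroup E]
    [InnerProductSpace ℝ E] {x y : E} (h : ‖x‖ = ‖y‖) {l m : ℝ} (hl : 0 ≤ l) (hm : 0 ≤ m) :
    √(l * m) * ‖x - y‖ ≤ ‖l • x - m • y‖ := by
  have hsq : (√(l * m) * ‖x - y‖) ^ 2 ≤ ‖l • x - m • y‖ ^ 2 := by
    rw [mul_pow, Real.sq_sqrt (mul_nonneg hl hm), norm_sub_sq_real, norm_sub_sq_real,
      real_inner_smul_left, real_inner_smul_right, norm_smul, norm_smul, Real.norm_of_nonneg hl,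
      Real.norm_of_nonneg hm, ← h]
    -- the difference of the two sides is `(l - m)² ‖x‖²`
    nlinarith [mul_nonneg (sq_nonneg (l - m)) (sq_nonneg ‖x‖)]
  exact pow_le_pow_iff_left₀ (by positivity) (norm_nonneg _) two_ne_zero |>.1 hsq

lemma integrableOn_Ico_prod_Ico_of_periodic {G : ℝ × ℝ → ℝ}
    (hG : ∀ (p : ℝ × ℝ) (k l : ℤ), G (p.1 + k, p.2 + l) = G p)
    (hG₀ : IntegrableOn G (Ico (0 : ℝ) 1 ×ˢ Ico (0 : ℝ) 1)) (k l : ℤ) :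
    IntegrableOn G (Ico (k : ℝ) (k + 1) ×ˢ Ico (l : ℝ) (l + 1)) := by
  have hτ : MeasurePreserving (fun p : ℝ × ℝ => p - ((k : ℝ), (l : ℝ))) volume volume :=
    measurePreserving_sub_right volume _
  have hpre : (fun p : ℝ × ℝ => p - ((k : ℝ), (l : ℝ))) ⁻¹' (Ico 0 1 ×ˢ Ico 0 1) =
      Ico (k : ℝ) (k + 1) ×ˢ Ico (l : ℝ) (l + 1) := by
    ext p
    simp only [mem_preimage, mem_prod, mem_Ico, Prod.fst_sub, Prod.snd_sub]
    constructor <;> rintro ⟨⟨_, _⟩, _, _⟩ <;> refine ⟨⟨?_, ?_⟩, ?_, ?_⟩ <;> linarith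
  have hGτ : G ∘ (fun p : ℝ × ℝ => p - ((k : ℝ), (l : ℝ))) = G := by
    funext p
    simpa using (hG (p - ((k : ℝ), (l : ℝ))) k l).symm
  rw [← hpre, ← hGτ]
  exact (hτ.integrableOn_comp_preimage (MeasurableEquiv.subRight _).measurableEmbedding).2 hG₀

lemma integrableOn_Icc_prod_Icc_of_periodic {G : ℝ × ℝ → ℝ}
    (hG : ∀ (p : ℝ × ℝ) (k l : ℤ), G (p.1 + k, p.2 + l) = G p)
    (hG₀ : IntegrableOn G (Ico (0 : ℝ) 1 ×ˢ Ico (0 : ℝ) 1)) {a c : ℝ} (hc : c - a ≤ 1) :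
    IntegrableOn G (Icc a c ×ˢ Icc a c) := by
  set T : ℤ → Set ℝ := fun k => Ico (k : ℝ) (k + 1)
  have hcover : Icc a c ⊆ T ⌊a⌋ ∪ T (⌊a⌋ + 1) := by
    intro x ⟨hax, hxc⟩
    have hfloor_le := Int.floor_le a
    have hlt_floor := Int.lt_floor_add_one a
    simp only [T, mem_union, mem_Ico, Int.cast_add, Int.cast_one]
    by_cases hx : x < ⌊a⌋ + 1
    · exact Or.inl ⟨by linarith, hx⟩
    · exact Or.inr ⟨by linarith, by linarith⟩
  have hsq := integrableOn_Ico_prod_Ico_of_periodic hG hG₀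
  refine IntegrableOn.mono_set ?_ (prod_mono hcover hcover)
  rw [union_prod, prod_union, prod_union]
  exact ((hsq _ _).union (hsq _ _)).union ((hsq _ _).union (hsq _ _))

lemma integral_le_sqrt_measureReal_mul_sqrt_integral_sq {α : Type*} [MeasurableSpace α]
    {μ : Measure α} [IsFiniteMeasure μ] {F : α → ℝ} (hF₀ : 0 ≤ᵐ[μ] F) (hF : MemLp F 2 μ) :
    ∫ x, F x ∂μ ≤ √(μ.real univ) * √(∫ x, F x ^ 2 ∂μ) := by
  have h := integral_mul_le_Lp_mul_Lq_of_nonneg Real.HolderConjugate.two_two hF₀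
    (ae_of_all _ fun _ => zero_le_one) (by simpa using hF) (memLp_const (1 : ℝ))
  simp only [mul_one, Real.one_rpow, integral_const, smul_eq_mul] at h
  rw [← Real.sqrt_eq_rpow, ← Real.sqrt_eq_rpow] at h
  simpa [mul_comm] using h

lemma integral_prod_sub_eq {α E : Type*} [MeasurableSpace α] [NormedAddCommGroup E]
    [NormedSpace ℝ E] [CompleteSpace E] {μ ν : Measure α} [IsFiniteMeasure μ] [IsFiniteMeasure ν]
    {g : α → E} (hμ : Integrable g μ) (hν : Integrable g ν) :
    ∫ p, (g p.1 - g p.2) ∂μ.prod ν = ν.real univ • ∫ x, g x ∂μ - μ.real univ • ∫ x, g x ∂ν := by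
  rw [integral_sub (hμ.comp_fst ν) (hν.comp_snd μ), integral_fun_fst, integral_fun_snd]

lemma norm_sub_le_mul_div_circleDist {E : Type*} [NormedAddCommGroup E] (g : ℝ → E)
    {s t δ : ℝ} (hst : |s - t| ≤ δ) (hδ : δ < 1) :
    ‖g s - g t‖ ≤ δ * (‖g s - g t‖ / circleDist s t) := by
  rcases eq_or_ne s t with rfl | hne
  · simp
  have hd := circleDist_pos (hst.trans_lt hδ) hne
  calc ‖g s - g t‖ = circleDist s t * (‖g s - g t‖ / circleDist s t) := by field_simp
    _ ≤ δ * (‖g s - g t‖ / circleDist s t) := by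
      gcongr
      exact (circleDist_le_abs_sub s t).trans hst

lemma setIntegral_norm_sub_le_mul_sqrt {E : Type*} [NormedAddCommGroup E] {g : ℝ → E}
    {K : Set (ℝ × ℝ)} {δ : ℝ} (hK : MeasurableSet K) (hK_fin : volume K ≠ ∞)
    (hKδ : ∀ p ∈ K, |p.1 - p.2| ≤ δ) (hδ₀ : 0 ≤ δ) (hδ : δ < 1)
    (hg : AEStronglyMeasurable (fun p : ℝ × ℝ => g p.1 - g p.2) (volume.restrict K))
    (hG : IntegrableOn (fun p : ℝ × ℝ => ‖g p.1 - g p.2‖ ^ 2 / circleDist p.1 p.2 ^ 2) K) :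
    ∫ p in K, ‖g p.1 - g p.2‖ ≤ δ * (√(volume.real K) *
      √(∫ p in K, ‖g p.1 - g p.2‖ ^ 2 / circleDist p.1 p.2 ^ 2)) := by
  have : IsFiniteMeasure (volume.restrict K) := isFiniteMeasure_restrict.2 hK_fin
  set F : ℝ × ℝ → ℝ := fun p => ‖g p.1 - g p.2‖ / circleDist p.1 p.2
  have hF₀ : ∀ p, 0 ≤ F p := fun p => div_nonneg (norm_nonneg _) (circleDist_nonneg _ _)
  have hF₂ : MemLp F 2 (volume.restrict K) := by
    refine (memLp_two_iff_integrable_sq (f := F) (hg.norm.aemeasurable.div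
      measurable_circleDist.aemeasurable).aestronglyMeasurable).2 ?_
    simp only [F, div_pow]
    exact hG
  have hpoint : ∀ᵐ p ∂volume.restrict K, ‖g p.1 - g p.2‖ ≤ δ * F p := by
    filter_upwards [ae_restrict_mem hK] with p hp
    exact norm_sub_le_mul_div_circleDist g (hKδ p hp) hδ
  calc ∫ p in K, ‖g p.1 - g p.2‖
      ≤ ∫ p in K, δ * F p := integral_mono_of_nonneg (ae_of_all _ fun _ => norm_nonneg _)
        ((hF₂.integrable one_le_two).const_mul δ) hpoint
    _ = δ * ∫ p in K, F p := integral_const_mul _ _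
    _ ≤ δ * (√(volume.real K) * √(∫ p in K, F p ^ 2)) := by
        gcongr
        simpa only [measureReal_restrict_apply_univ] using
          integral_le_sqrt_measureReal_mul_sqrt_integral_sq (ae_of_all _ hF₀) hF₂
    _ = _ := by simp only [F, div_pow]

theorem norm_setIntegral_Icc_sub_setIntegral_Icc_le {E : Type*} [NormedAddCommGroup E]
    [InnerProductSpace ℝ E] [CompleteSpace E] {g : ℝ → E} {a b c : ℝ}
    (hab : a < b) (hbc : b < c) (hca : c - a < 1) (hg : IntegrableOn g (Icc a c))
    (hG : IntegrableOn (fun p : ℝ × ℝ => ‖g p.1 - g p.2‖ ^ 2 / circleDist p.1 p.2 ^ 2)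
      (Icc a c ×ˢ Icc a c))
    (hnorm : ‖∫ t in Icc a b, g t‖ = ‖∫ t in Icc b c, g t‖) :
    ‖(∫ t in Icc a b, g t) - ∫ t in Icc b c, g t‖ ≤
      (c - a) * √(∫ p in Icc a c ×ˢ Icc a c, ‖g p.1 - g p.2‖ ^ 2 / circleDist p.1 p.2 ^ 2) := by
  set μ := volume.restrict (Icc a b)
  set ν := volume.restrict (Icc b c)
  set K := Icc a b ×ˢ Icc b c
  have hIS : Icc a b ⊆ Icc a c := Icc_subset_Icc le_rfl hbc.le
  have hJS : Icc b c ⊆ Icc a c := Icc_subset_Icc hab.le le_rfl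
  have hμ : μ.real univ = b - a := by
    rw [measureReal_restrict_apply_univ, Real.volume_real_Icc_of_le hab.le]
  have hν : ν.real univ = c - b := by
    rw [measureReal_restrict_apply_univ, Real.volume_real_Icc_of_le hbc.le]
  have hμν : μ.prod ν = volume.restrict K := by
    rw [Measure.prod_restrict, ← Measure.volume_eq_prod]
  have hK_vol : volume.real K = (c - b) * (b - a) := by
    rw [Measure.volume_eq_prod, measureReal_prod_prod, Real.volume_real_Icc_of_le hab.le,
      Real.volume_real_Icc_of_le hbc.le, mul_comm]
  have hKδ : ∀ p ∈ K, |p.1 - p.2| ≤ c - a := fun p ⟨⟨_, _⟩, _, _⟩ =>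
    abs_le.2 ⟨by linarith, by linarith⟩
  have hgK : Integrable (fun p : ℝ × ℝ => g p.1 - g p.2) (volume.restrict K) := by
    rw [← hμν]
    exact ((hg.mono_set hIS).comp_fst ν).sub ((hg.mono_set hJS).comp_snd μ)
  have hGK : ∫ p in K, ‖g p.1 - g p.2‖ ^ 2 / circleDist p.1 p.2 ^ 2 ≤
      ∫ p in Icc a c ×ˢ Icc a c, ‖g p.1 - g p.2‖ ^ 2 / circleDist p.1 p.2 ^ 2 :=
    setIntegral_mono_set hG (ae_of_all _ fun _ => by positivity)
      (prod_mono hIS hJS).eventuallyLE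
  have hs : 0 < √((c - b) * (b - a)) := Real.sqrt_pos.2 (by nlinarith)
  refine le_of_mul_le_mul_left ?_ hs
  calc √((c - b) * (b - a)) * ‖(∫ t in Icc a b, g t) - ∫ t in Icc b c, g t‖
      ≤ ‖(c - b) • (∫ t in Icc a b, g t) - (b - a) • ∫ t in Icc b c, g t‖ :=
        sqrt_mul_mul_norm_sub_le_norm_smul_sub_smul hnorm (by linarith) (by linarith)
    _ = ‖∫ p in K, (g p.1 - g p.2)‖ := by
        rw [← hμν, integral_prod_sub_eq (hg.mono_set hIS) (hg.mono_set hJS), hμ, hν]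
    _ ≤ ∫ p in K, ‖g p.1 - g p.2‖ := norm_integral_le_integral_norm _
    _ ≤ (c - a) * (√(volume.real K) *
          √(∫ p in K, ‖g p.1 - g p.2‖ ^ 2 / circleDist p.1 p.2 ^ 2)) :=
        setIntegral_norm_sub_le_mul_sqrt (measurableSet_Icc.prod measurableSet_Icc)
          (isCompact_Icc.prod isCompact_Icc).measure_lt_top.ne hKδ (by linarith) hca
          hgK.aestronglyMeasurable (hG.mono_set (prod_mono hIS hJS))
    _ ≤ √((c - b) * (b - a)) * ((c - a) *
          √(∫ p in Icc a c ×ˢ Icc a c, ‖g p.1 - g p.2‖ ^ 2 / circleDist p.1 p.2 ^ 2)) := by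
        rw [hK_vol, mul_left_comm]
        gcongr
        linarith

lemma seminormH_eq_sqrt_setIntegral_prod {n : ℕ} {u : ℝ → EuclideanSpace ℝ (Fin n)}
    {I J : Set ℝ}
    (h : IntegrableOn (fun p : ℝ × ℝ => ‖u p.1 - u p.2‖ ^ 2 / circleDist p.1 p.2 ^ 2) (I ×ˢ J)) :
    seminormH u I J = √(∫ p in I ×ˢ J, ‖u p.1 - u p.2‖ ^ 2 / circleDist p.1 p.2 ^ 2) := by
  rw [Measure.volume_eq_prod] at h ⊢
  rw [seminormH, setIntegral_prod _ h]

lemma edge_eq_setIntegral {n : ℕ} {f fd : ℝ → EuclideanSpace ℝ (Fin n)}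
    (hFTC : ∀ a b : ℝ, f b - f a = ∫ t in a..b, fd t) {θ : ℤ → ℝ} {i : ℤ}
    (hθ : θ i ≤ θ (i + 1)) :
    edge f θ i = ∫ t in Icc (θ i) (θ (i + 1)), fd t := by
  rw [edge, hFTC, intervalIntegral.integral_of_le hθ, integral_Icc_eq_integral_Ioc]

theorem consecutive_edge_estimate (n : ℕ)
    (f fd : ℝ → EuclideanSpace ℝ (Fin n))
    (hfd_per : ∀ x : ℝ, fd (x + 1) = fd x)
    (hfd_loc : LocallyIntegrable fd volume)
    (hFTC : ∀ a b : ℝ, f b - f a = ∫ t in a..b, fd t)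
    (hH12 : IntegrableOn
      (fun p : ℝ × ℝ => ‖fd p.1 - fd p.2‖ ^ 2 / circleDist p.1 p.2 ^ 2)
      (Set.Ico (0 : ℝ) 1 ×ˢ Set.Ico (0 : ℝ) 1) volume)
    (m : ℕ) (hm : 3 ≤ m) (θ : ℤ → ℝ)
    (hmono : StrictMono θ)
    (hθper : ∀ i : ℤ, θ (i + m) = θ i + 1)
    (Lm : ℝ)
    (heq : ∀ i : ℤ, ‖edge f θ i‖ = Lm / m)
 :
    ∀ i : ℤ, ‖edge f θ i - edge f θ (i + 1)‖ ≤
      2 * (θ (i + 2) - θ i) *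
        seminormH fd (Set.Icc (θ i) (θ (i + 2))) (Set.Icc (θ i) (θ (i + 2))) := by
  intro i
  have hab : θ i < θ (i + 1) := hmono (lt_add_one i)
  have hbc : θ (i + 1) < θ (i + 1 + 1) := hmono (lt_add_one _)
  have hx := edge_eq_setIntegral hFTC hab.le
  have hy := edge_eq_setIntegral hFTC hbc.le
  rw [add_assoc, one_add_one_eq_two] at hbc hy
  have hca : θ (i + 2) - θ i < 1 := by
    have := hmono (show i + 2 < i + m by omega)
    rw [hθper] at this
    linarith
  have hper : ∀ (p : ℝ × ℝ) (k l : ℤ), ‖fd (p.1 + k) - fd (p.2 + l)‖ ^ 2 /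
      circleDist (p.1 + k) (p.2 + l) ^ 2 = ‖fd p.1 - fd p.2‖ ^ 2 / circleDist p.1 p.2 ^ 2 := by
    intro p k l
    have hfd : Function.Periodic fd 1 := hfd_per
    simpa [circleDist_add_intCast] using
      congrArg₂ (fun x y => ‖x - y‖ ^ 2 / circleDist p.1 p.2 ^ 2)
        (hfd.int_mul k p.1) (hfd.int_mul l p.2)
  have hG := integrableOn_Icc_prod_Icc_of_periodic hper hH12 hca.le
  have key := norm_setIntegral_Icc_sub_setIntegral_Icc_le hab hbc hca
    (hfd_loc.integrableOn_isCompact isCompact_Icc) hG (by rw [← hx, ← hy, heq, heq])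
  rw [hx, hy, seminormH_eq_sqrt_setIntegral_prod hG]
  exact key.trans (mul_le_mul_of_nonneg_right (by linarith) (Real.sqrt_nonneg _))

end
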